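/- Let a, b, q, r > 0 with q ≤ m, q > 1, r > a/(bq), A ≥ 1. Then for all t ≥ 0: r·A·exp(rt) − (a·A^q/(rq))·(exp(rqt) − 1) + b·A^m·exp(rmt) ≥ 0. -/
import Mathlib


/-- The constant-in-space supersolution check:
`r A e^(rt) - (a A^q/(rq)) (e^(rqt) - 1) + b A^m e^(rmt) ≥ 0`
for `1 < q ≤ m`, `r > a/(bq)`, `A ≥ 1`. -/
theorem stmt10 (a b q m r A : ℝ)
    (ha : 0 < a) (hb : 0 < b) (hq : 0 < q) (hr : 0 < r)
    (hq1 : 1 < q) (hqm : q ≤ m) (hra : r > a / (b * q)) (hA : 1 ≤ A) :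
    ∀ t : ℝ, 0 ≤ t →
      r * A * Real.exp (r * t)
        - (a * A ^ q / (r * q)) * (Real.exp (r * q * t) - 1)
        + b * A ^ m * Real.exp (r * m * t) ≥ 0 := by
  intro t ht
  have hAq : (0:ℝ) < A ^ q := Real.rpow_pos_of_pos (lt_of_lt_of_le one_pos hA) q
  have hAqm : A ^ q ≤ A ^ m := Real.rpow_le_rpow_of_exponent_le hA hqm
  have hexp : Real.exp (r * q * t) ≤ Real.exp (r * m * t) := by
    apply Real.exp_le_exp.2
    have : r * q ≤ r * m := by nlinarith
    nlinarith
  have hab : a / (r * q) ≤ b := by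
    rw [div_le_iff₀ (by positivity)]
    rw [gt_iff_lt, div_lt_iff₀ (by positivity)] at hra
    nlinarith
  have key : a * A ^ q / (r * q) * Real.exp (r * q * t) ≤ b * A ^ m * Real.exp (r * m * t) := by
    have h1 : a * A ^ q / (r * q) = (a / (r * q)) * A ^ q := by ring
    rw [h1]
    have hc : a / (r * q) * A ^ q ≤ b * A ^ m := mul_le_mul hab hAqm hAq.le hb.le
    exact mul_le_mul hc hexp (Real.exp_pos _).le (by positivity)
  have h2 : (0:ℝ) ≤ r * A * Real.exp (r * t) := by positivity
  have h3 : (0:ℝ) ≤ a * A ^ q / (r * q) := by positivity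
  nlinarith
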